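/- arXiv:2008.11983 — 7 statements merged into one kernel-verified Lean document; each statement's English description precedes it below -/
import Mathlib

section
/- Let φ(t) be a smooth family of (0,1)-vector forms with φ(0)=0, ω_t = e^{i_{φ(t)}|i_{φ̄(t)}}(ω(t)) a smooth family of Hermitian (1,1)-forms with ω(0) = ω, and suppose ∂_t ∂̄_t ω_t = 0 for all t. Then −∂(φ'(0) ⌟ ∂ω) + ∂̄(φ̄'(0) ⌟ ∂̄ω) + ∂∂̄ω'(0) = 0; equivalently 2i·Im(∂ ∘ i_{φ'(0)} ∘ ∂)(ω) = ∂∂̄ ω'(0). -/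
/-!
Differentiate the identity `∂_t ∂̄_t ω_t = 0` at `t = 0`.  The corrections `C_i = 1 + o(t)`
contribute nothing to the first derivative, and by the product rule the remaining terms are
`[∂̄, i_{φ̄'}] ∂̄ω + ∂ [∂, i_{φ'}] ω + ∂∂̄ω'`; expanding the commutators, `∂² = ∂̄² = 0` kills
two of the four terms.
-/

open Asymptotics Topology

section

variable {𝕜 F : Type*} [NontriviallyNormedField 𝕜] [NormedAddCommGroup F]

theorem eq_of_isLittleO_sub_id {f : 𝕜 → F} {a : F}
    (h : (fun t => f t - a) =o[𝓝 0] fun t => t) : f 0 = a := by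
  have h0 : f 0 - a = 0 := h.isBigO.eq_zero_imp.self_of_nhds rfl
  exact sub_eq_zero.mp h0

theorem hasDerivAt_zero_of_isLittleO_sub_id [NormedSpace 𝕜 F] {f : 𝕜 → F} {a : F}
    (h : (fun t => f t - a) =o[𝓝 0] fun t => t) : HasDerivAt f 0 0 := by
  rw [hasDerivAt_iff_isLittleO]
  simpa [eq_of_isLittleO_sub_id h] using h

end

section

variable {V W : Type*} [NormedAddCommGroup V] [NormedSpace ℂ V]
  [NormedAddCommGroup W] [NormedSpace ℂ W]

theorem HasDerivAt.clm_apply_of_real {A : ℝ → V →L[ℂ] W} {A' : V →L[ℂ] W}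
    {v : ℝ → V} {v' : V} {x : ℝ} (hA : HasDerivAt A A' x) (hv : HasDerivAt v v' x) :
    HasDerivAt (fun t => A t (v t)) (A' (v x) + A x v') x := by
  have hA' : HasDerivAt (fun t => (A t).restrictScalars ℝ) (A'.restrictScalars ℝ) x := by
    simpa [Function.comp_def] using
      (ContinuousLinearMap.restrictScalarsL ℂ V W ℝ ℝ).hasFDerivAt.comp_hasDerivAt x hA
  exact hA'.clm_apply hv

theorem HasDerivAt.clm_apply_of_isLittleO_sub_one {C : ℝ → V →L[ℂ] V}
    (hC : (fun t => C t - 1) =o[𝓝 0] fun t => t) {v : ℝ → V} {v' : V}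
    (hv : HasDerivAt v v' 0) : HasDerivAt (fun t => C t (v t)) v' 0 := by
  simpa [eq_of_isLittleO_sub_id hC] using
    (hasDerivAt_zero_of_isLittleO_sub_id hC).clm_apply_of_real hv

theorem hasDerivAt_comp_sub_comp_add {E : ℝ → V →L[ℂ] V} {E' : V →L[ℂ] V} {x : ℝ}
    (A B : V →L[ℂ] V) (hE : HasDerivAt E E' x) :
    HasDerivAt (fun t => A ∘L E t - E t ∘L A + B) (A ∘L E' - E' ∘L A) x :=
  ((hE.const_mul A).sub (hE.mul_const A)).add_const B

end

theorem statement5_general (V : Type*) [NormedAddCommGroup V] [NormedSpace ℂ V]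
    (D Db : V →L[ℂ] V) (hD2 : ∀ x, D (D x) = 0) (hDb2 : ∀ x, Db (Db x) = 0)
    (E Eb : ℝ → (V →L[ℂ] V)) (E' Eb' : V →L[ℂ] V)
    (hE0 : E 0 = 0) (hEb0 : Eb 0 = 0)
    (hE : HasDerivAt E E' 0) (hEb : HasDerivAt Eb Eb' 0)
    (ω : ℝ → V) (ω₀ ω' : V) (hω0 : ω 0 = ω₀) (hω : HasDerivAt ω ω' 0)
    (C₁ C₂ C₃ : ℝ → (V →L[ℂ] V))
    (hC₁ : (fun t => C₁ t - 1) =o[nhds (0 : ℝ)] fun t : ℝ => t)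
    (hC₂ : (fun t => C₂ t - 1) =o[nhds (0 : ℝ)] fun t : ℝ => t)
    (hC₃ : (fun t => C₃ t - 1) =o[nhds (0 : ℝ)] fun t : ℝ => t)
    -- the family ω_t is SKT for every t: ∂_t ∂̄_t ω_t = 0
    (hSKTfam : ∀ t : ℝ,
      C₁ t ((Db ∘L Eb t - Eb t ∘L Db + D)
        (C₂ t ((D ∘L E t - E t ∘L D + Db) (C₃ t (ω t))))) = 0) :
    -(D (E' (D ω₀))) + Db (Eb' (Db ω₀)) + D (Db ω') = 0 := by
  have hv := hω.clm_apply_of_isLittleO_sub_one hC₃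
  have hw := (hasDerivAt_comp_sub_comp_add D Db hE).clm_apply_of_real hv
  have hx := hw.clm_apply_of_isLittleO_sub_one hC₂
  have hy := (hasDerivAt_comp_sub_comp_add Db D hEb).clm_apply_of_real hx
  have hderiv := hy.clm_apply_of_isLittleO_sub_one hC₁
  simp only [hSKTfam, hω0, hE0, hEb0, eq_of_isLittleO_sub_id hC₂, eq_of_isLittleO_sub_id hC₃]
    at hderiv
  have hderiv_eq_zero := hderiv.unique (hasDerivAt_const 0 0)
  simp only [ContinuousLinearMap.comp_zero, ContinuousLinearMap.zero_comp, sub_self, zero_add,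
    one_apply_eq_self, sub_apply, ContinuousLinearMap.comp_apply, hDb2, map_zero, sub_zero, map_add,
    map_sub, hD2, zero_sub] at hderiv_eq_zero
  linear_combination (norm := abel) hderiv_eq_zero

theorem statement5 (V : Type*) [NormedAddCommGroup V] [NormedSpace ℂ V]
    (D Db : V →L[ℂ] V) (hD2 : ∀ x, D (D x) = 0) (hDb2 : ∀ x, Db (Db x) = 0)
    (E Eb : ℝ → (V →L[ℂ] V)) (E' Eb' : V →L[ℂ] V)
    (hE0 : E 0 = 0) (hEb0 : Eb 0 = 0)
    (hE : HasDerivAt E E' 0) (hEb : HasDerivAt Eb Eb' 0)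
    (ω : ℝ → V) (ω₀ ω' : V) (hω0 : ω 0 = ω₀) (hω : HasDerivAt ω ω' 0)
    (hSKT : D (Db ω₀) = 0) (hSKT' : Db (D ω₀) = 0)
    (C₁ C₂ C₃ : ℝ → (V →L[ℂ] V))
    (hC₁ : (fun t => C₁ t - 1) =o[nhds (0 : ℝ)] fun t : ℝ => t)
    (hC₂ : (fun t => C₂ t - 1) =o[nhds (0 : ℝ)] fun t : ℝ => t)
    (hC₃ : (fun t => C₃ t - 1) =o[nhds (0 : ℝ)] fun t : ℝ => t)
    -- the family ω_t is SKT for every t: ∂_t ∂̄_t ω_t = 0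
    (hSKTfam : ∀ t : ℝ,
      C₁ t ((Db ∘L Eb t - Eb t ∘L Db + D)
        (C₂ t ((D ∘L E t - E t ∘L D + Db) (C₃ t (ω t))))) = 0) :
    -(D (E' (D ω₀))) + Db (Eb' (Db ω₀)) + D (Db ω') = 0 :=
  statement5_general V D Db hD2 hDb2 E Eb E' Eb' hE0 hEb0 hE hEb ω ω₀ ω' hω0 hω C₁ C₂ C₃ hC₁ hC₂ hC₃
    hSKTfam
end

section
/- Let g be the 2-step nilpotent Lie algebra with complex coframe η^1,…,η^4 of (1,0)-forms satisfying dη^i = 0 for i = 1,2,3 and dη^4 = a_1 η^{12} + a_2 η^{13} + a_3 η^{1 1̄} + a_4 η^{1 2̄} + a_5 η^{1 3̄} + a_6 η^{23} + a_7 η^{2 1̄} + a_8 η^{2 2̄} + a_9 η^{2 3̄} + a_{10} η^{3 1̄} + a_{11} η^{3 2̄} + a_{12} η^{3 3̄} with a_8 = 0. Then the invariant metric with fundamental form ω = (i/2) Σ_{j=1}^4 η^j ∧ η̄^j satisfies ∂∂̄ω = 0 if and only if a_1 = a_4 = a_6 = a_7 = a_9 = a_{11} = 0 and |a_2|² + |a_5|²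 + |a_{10}|² = 2 Re(a_3 ā_{12}). -/
/-!
Only `η^4` fails to be closed, so `∂̄ω = (i/2) (∂̄η^4 ∧ η̄^4 - η^4 ∧ ∂̄η̄^4)`, and since `∂̄η^4` and
`∂̄η̄^4` are built from closed generators, `∂∂̄ω = (i/2) (∂̄η^4 ∧ ∂η̄^4 - ∂η^4 ∧ ∂̄η̄^4)`. Writing
`∂̄η^4 = Σ A_{jk} η^{j k̄}` and `∂η^4 = Σ B_{jk} η^{jk}`, the coefficient of `η^{pq p̄ q̄}` in this
(2,2)-form is `2 Re (A_{pp} Ā_{qq}) - |A_{pq}|² - |A_{qp}|² - |B_{pq} - B_{qp}|²`. As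
`A_{22} = a_8 = 0`, the coefficients for `(p, q) = (1, 2)` and `(2, 3)` are minus sums of squares,
which forces `a_1 = a_4 = a_7 = 0` and `a_6 = a_9 = a_{11} = 0`; the one for `(1, 3)` is the
remaining equation. Conversely, once those `a_i` vanish, `∂∂̄ω` is the `(1, 3)` coefficient times
`η^{13 1̄ 3̄}`.
-/

open ExteriorAlgebra

noncomputable section

abbrev Λ8 : Type := ExteriorAlgebra ℂ (Fin 8 → ℂ)

/-- generators of the coframe -/
def gen (j : Fin 8) : Λ8 := ExteriorAlgebra.ι ℂ (Pi.single j 1)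

/-- the (1,0)-forms η^1,…,η^4 (zero-indexed) -/
def eta (j : Fin 4) : Λ8 := gen (Fin.castAdd 4 j)

/-- the (0,1)-forms η̄^1,…,η̄^4 (zero-indexed) -/
def etb (j : Fin 4) : Λ8 := gen (Fin.natAdd 4 j)

theorem eq_zero_of_norm_sq_add_norm_sq_add_norm_sq_eq_zero {E : Type*} [NormedAddCommGroup E]
    {x y z : E} (h : ‖x‖ ^ 2 + ‖y‖ ^ 2 + ‖z‖ ^ 2 = 0) : x = 0 ∧ y = 0 ∧ z = 0 := by
  have := sq_nonneg ‖x‖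
  have := sq_nonneg ‖y‖
  have := sq_nonneg ‖z‖
  refine ⟨?_, ?_, ?_⟩ <;> rw [← norm_eq_zero, ← sq_eq_zero_iff] <;> linarith

section ExteriorProducts

variable {R M : Type*} [CommRing R] [AddCommGroup M] [Module R M]

def twoForm {m n : Type*} [Fintype m] [Fintype n] (A : Matrix m n R) (x : m → M) (y : n → M) :
    ExteriorAlgebra R M :=
  ∑ j, ∑ k, A j k • (ι R (x j) * ι R (y k))

theorem ι_mul_ι_swap (x y : M) : ι R x * ι R y = -(ι R y * ι R x) :=
  eq_neg_of_add_eq_zero_left (ι_add_mul_swap x y)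

theorem ι_mul_ι_mul_swap (x y : M) (z : ExteriorAlgebra R M) :
    ι R x * (ι R y * z) = -(ι R y * (ι R x * z)) := by
  rw [← mul_assoc, ι_mul_ι_swap, neg_mul, mul_assoc]

theorem ι_mul_ι_mul_self (x : M) (z : ExteriorAlgebra R M) : ι R x * (ι R x * z) = 0 := by
  rw [← mul_assoc, ι_sq_zero, zero_mul]

theorem twoForm_fin_three (A : Matrix (Fin 3) (Fin 3) R) (x y : Fin 3 → M) :
    twoForm A x y =
      A 0 0 • (ι R (x 0) * ι R (y 0)) + A 0 1 • (ι R (x 0) * ι R (y 1))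
        + A 0 2 • (ι R (x 0) * ι R (y 2)) + A 1 0 • (ι R (x 1) * ι R (y 0))
        + A 1 1 • (ι R (x 1) * ι R (y 1)) + A 1 2 • (ι R (x 1) * ι R (y 2))
        + A 2 0 • (ι R (x 2) * ι R (y 0)) + A 2 1 • (ι R (x 2) * ι R (y 1))
        + A 2 2 • (ι R (x 2) * ι R (y 2)) := by
  simp only [twoForm, Fin.sum_univ_three, add_assoc]

end ExteriorProducts

section Antiderivation

variable {R M : Type*} [CommRing R] [AddCommGroup M] [Module R M]

def IsAntiderivation (D : ExteriorAlgebra R M →ₗ[R] ExteriorAlgebra R M) : Prop :=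
  ∀ (v : M) (y : ExteriorAlgebra R M), D (ι R v * y) = D (ι R v) * y - ι R v * D y

variable {D : ExteriorAlgebra R M →ₗ[R] ExteriorAlgebra R M}

theorem IsAntiderivation.map_ι_mul_ι (hD : IsAntiderivation D) {u v : M}
    (hu : D (ι R u) = 0) (hv : D (ι R v) = 0) : D (ι R u * ι R v) = 0 := by
  rw [hD, hu, hv, zero_mul, mul_zero, sub_zero]

theorem IsAntiderivation.map_ι_mul_ι_mul (hD : IsAntiderivation D) {u v : M}
    (hu : D (ι R u) = 0) (hv : D (ι R v) = 0) (z : ExteriorAlgebra R M) :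
    D (ι R u * (ι R v * z)) = ι R u * (ι R v * D z) := by
  rw [hD, hD, hu, hv, zero_mul, zero_mul, zero_sub, zero_sub, mul_neg, neg_neg]

variable {m n : Type*} [Fintype m] [Fintype n] {x : m → M} {y : n → M}

theorem IsAntiderivation.map_twoForm (hD : IsAntiderivation D) (A : Matrix m n R)
    (hx : ∀ j, D (ι R (x j)) = 0) (hy : ∀ k, D (ι R (y k)) = 0) : D (twoForm A x y) = 0 := by
  simp only [twoForm, map_sum, map_smul, hD.map_ι_mul_ι (hx _) (hy _), smul_zero,
    Finset.sum_const_zero]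

theorem IsAntiderivation.map_twoForm_mul (hD : IsAntiderivation D) (A : Matrix m n R)
    (hx : ∀ j, D (ι R (x j)) = 0) (hy : ∀ k, D (ι R (y k)) = 0) (z : ExteriorAlgebra R M) :
    D (twoForm A x y * z) = twoForm A x y * D z := by
  simp only [twoForm, Finset.sum_mul, smul_mul_assoc, mul_assoc, map_sum, map_smul,
    hD.map_ι_mul_ι_mul (hx _) (hy _)]

end Antiderivation

section MonomialCoeff

variable {R I : Type*} [CommRing R]

/-- The coefficient of `e_{S 0} ∧ ⋯ ∧ e_{S (k-1)}` when the `S i` are distinct. -/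
def monomialCoeff : {k : ℕ} → (Fin k → I) → ExteriorAlgebra R (I → R) →ₗ[R] R
  | 0, _ => algebraMapInv.toLinearMap
  | _ + 1, S => monomialCoeff (Fin.tail S) ∘ₗ CliffordAlgebra.contractLeft (LinearMap.proj (S 0))

@[simp] theorem monomialCoeff_zero (S : Fin 0 → I) (x : ExteriorAlgebra R (I → R)) :
    monomialCoeff S x = algebraMapInv x := rfl

@[simp] theorem monomialCoeff_succ {k : ℕ} (S : Fin (k + 1) → I) (x : ExteriorAlgebra R (I → R)) :
    monomialCoeff S x =
      monomialCoeff (Fin.tail S) (CliffordAlgebra.contractLeft (LinearMap.proj (S 0)) x) :=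
  rfl

end MonomialCoeff

section Coframe

variable {D : Λ8 →ₗ[ℂ] Λ8}

def hol (j : Fin 3) : Fin 8 → ℂ := Pi.single (Fin.castAdd 4 j.castSucc) 1

def antihol (j : Fin 3) : Fin 8 → ℂ := Pi.single (Fin.natAdd 4 j.castSucc) 1

theorem ι_hol (j : Fin 3) : ι ℂ (hol j) = eta j.castSucc := rfl

theorem ι_antihol (j : Fin 3) : ι ℂ (antihol j) = etb j.castSucc := rfl

theorem IsAntiderivation.map_sum_eta_mul_etb (hD : IsAntiderivation D)
    (hη : ∀ j, D (ι ℂ (hol j)) = 0) (hη' : ∀ j, D (ι ℂ (antihol j)) = 0) :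
    D (∑ j : Fin 4, eta j * etb j) = D (eta 3) * etb 3 - eta 3 * D (etb 3) := by
  rw [Fin.sum_univ_castSucc, map_add, map_sum]
  simp only [← ι_hol, ← ι_antihol, hD.map_ι_mul_ι (hη _) (hη' _), Finset.sum_const_zero, zero_add]
  exact hD _ _

/-- `∂̄η^4 ∧ ∂η̄^4 - ∂η^4 ∧ ∂̄η̄^4` for `∂̄η^4 = Σ A_{jk} η^{j k̄}` and `∂η^4 = Σ B_{jk} η^{jk}`. -/
def ddbarForm (A B : Matrix (Fin 3) (Fin 3) ℂ) : Λ8 :=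
  twoForm A hol antihol * twoForm (A.map (starRingEnd ℂ)) antihol hol
    - twoForm B hol hol * twoForm (B.map (starRingEnd ℂ)) antihol antihol

theorem del_delbar_sum_eta_mul_etb {del delbar : Λ8 →ₗ[ℂ] Λ8} {A B : Matrix (Fin 3) (Fin 3) ℂ}
    (hdel : IsAntiderivation del) (hdelbar : IsAntiderivation delbar)
    (hclosed : ∀ j : Fin 4, j ≠ 3 →
      del (eta j) = 0 ∧ delbar (eta j) = 0 ∧ del (etb j) = 0 ∧ delbar (etb j) = 0)
    (hdel4 : del (eta 3) = twoForm B hol hol)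
    (hdelbar4 : delbar (eta 3) = twoForm A hol antihol)
    (hdelb4 : del (etb 3) = twoForm (A.map (starRingEnd ℂ)) antihol hol)
    (hdelbarb4 : delbar (etb 3) = twoForm (B.map (starRingEnd ℂ)) antihol antihol) :
    del (delbar (∑ j : Fin 4, eta j * etb j)) = ddbarForm A B := by
  have hne (j : Fin 3) : j.castSucc ≠ 3 := (Fin.castSucc_lt_last j).ne
  have hη (j : Fin 3) : del (ι ℂ (hol j)) = 0 := (hclosed _ (hne j)).1
  have hη' (j : Fin 3) : del (ι ℂ (antihol j)) = 0 := (hclosed _ (hne j)).2.2.1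
  have h4 : del (eta 3 * delbar (etb 3)) =
      del (eta 3) * delbar (etb 3) - eta 3 * del (delbar (etb 3)) := hdel _ _
  rw [hdelbarb4, hdel.map_twoForm _ hη' hη', mul_zero, sub_zero] at h4
  rw [hdelbar.map_sum_eta_mul_etb (fun j => (hclosed _ (hne j)).2.1)
      (fun j => (hclosed _ (hne j)).2.2.2), map_sub, hdelbar4, hdelbarb4,
    hdel.map_twoForm_mul _ hη hη', h4, hdelb4, hdel4, ddbarForm]

def diagCoeff (A B : Matrix (Fin 3) (Fin 3) ℂ) (p q : Fin 3) : ℝ :=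
  2 * (A p p * starRingEnd ℂ (A q q)).re - ‖A p q‖ ^ 2 - ‖A q p‖ ^ 2 - ‖B p q - B q p‖ ^ 2

theorem ofReal_diagCoeff (A B : Matrix (Fin 3) (Fin 3) ℂ) (p q : Fin 3) :
    (diagCoeff A B p q : ℂ) =
      A p p * starRingEnd ℂ (A q q) + A q q * starRingEnd ℂ (A p p)
        - A p q * starRingEnd ℂ (A p q) - A q p * starRingEnd ℂ (A q p)
        - (B p q - B q p) * starRingEnd ℂ (B p q - B q p) := by
  simp only [diagCoeff, Complex.ofReal_sub, Complex.ofReal_mul, Complex.re_eq_add_conj,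
    Complex.ofReal_pow, Complex.mul_conj', map_mul, Complex.conj_conj]
  push_cast
  ring

set_option maxHeartbeats 1000000 in
theorem monomialCoeff_ddbarForm (A B : Matrix (Fin 3) (Fin 3) ℂ) {p q : Fin 3} (hpq : p < q) :
    monomialCoeff ![Fin.castAdd 4 p.castSucc, Fin.castAdd 4 q.castSucc,
        Fin.natAdd 4 p.castSucc, Fin.natAdd 4 q.castSucc] (ddbarForm A B) = diagCoeff A B p q := by
  rw [ofReal_diagCoeff]
  fin_cases p <;> fin_cases q <;> try exact absurd hpq (by decide)
  all_goals
    simp only [ddbarForm, twoForm, Fin.sum_univ_three, hol, antihol, add_mul, mul_add,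
      smul_mul_assoc, mul_smul_comm, mul_assoc, map_add, map_sub, map_smul]
    simp (config := { decide := true }) [CliffordAlgebra.contractLeft_ι_mul,
      CliffordAlgebra.contractLeft_ι]
    ring

theorem ddbarForm_eq_smul (a b c d e : ℂ) :
    ddbarForm !![a, 0, b; 0, 0, 0; c, 0, d] !![0, 0, e; 0, 0, 0; 0, 0, 0] =
      (diagCoeff !![a, 0, b; 0, 0, 0; c, 0, d] !![0, 0, e; 0, 0, 0; 0, 0, 0] 0 2 : ℂ) •
        (ι ℂ (hol 0) * (ι ℂ (hol 2) * (ι ℂ (antihol 0) * ι ℂ (antihol 2)))) := by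
  rw [ofReal_diagCoeff]
  simp only [ddbarForm, twoForm, Fin.sum_univ_three, Matrix.of_apply, Matrix.map_apply,
    Matrix.cons_val', Matrix.cons_val, Matrix.cons_val_fin_one, Matrix.cons_val_zero,
    Matrix.cons_val_one, map_zero, zero_smul, add_zero, zero_add, add_mul, mul_add, smul_mul_assoc,
    mul_smul_comm, mul_assoc, ι_mul_ι_mul_swap (antihol _) (hol _),
    ι_mul_ι_swap (antihol _) (hol _), ι_mul_ι_mul_self, ι_sq_zero, mul_zero, mul_neg, smul_zero,
    smul_neg, sub_zero]
  simp only [ι_mul_ι_mul_swap (hol 2) (hol 0), ι_mul_ι_swap (antihol 2) (antihol 0), mul_neg,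
    neg_neg, smul_neg]
  module

theorem diagCoeff_eq_zero_of_ddbarForm_eq_zero {A B : Matrix (Fin 3) (Fin 3) ℂ}
    (h : ddbarForm A B = 0) {p q : Fin 3} (hpq : p < q) : diagCoeff A B p q = 0 := by
  have hc := (monomialCoeff_ddbarForm A B hpq).symm
  rwa [h, map_zero, Complex.ofReal_eq_zero] at hc

theorem ddbarForm_eq_zero_iff (a1 a2 a3 a4 a5 a6 a7 a9 a10 a11 a12 : ℂ) :
    ddbarForm !![a3, a4, a5; a7, 0, a9; a10, a11, a12] !![0, a1, a2; 0, 0, a6; 0, 0, 0] = 0 ↔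
      a1 = 0 ∧ a4 = 0 ∧ a6 = 0 ∧ a7 = 0 ∧ a9 = 0 ∧ a11 = 0 ∧
        ‖a2‖ ^ 2 + ‖a5‖ ^ 2 + ‖a10‖ ^ 2 = 2 * (a3 * starRingEnd ℂ a12).re := by
  constructor
  · intro h
    have h01 := diagCoeff_eq_zero_of_ddbarForm_eq_zero h (show (0 : Fin 3) < 1 by decide)
    have h02 := diagCoeff_eq_zero_of_ddbarForm_eq_zero h (show (0 : Fin 3) < 2 by decide)
    have h12 := diagCoeff_eq_zero_of_ddbarForm_eq_zero h (show (1 : Fin 3) < 2 by decide)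
    simp only [diagCoeff, Matrix.of_apply, Matrix.cons_val', Matrix.cons_val,
      Matrix.cons_val_zero, Matrix.cons_val_one, Matrix.cons_val_fin_one, map_zero, mul_zero,
      zero_mul, Complex.zero_re, zero_sub, sub_zero] at h01 h02 h12
    obtain ⟨rfl, rfl, rfl⟩ := eq_zero_of_norm_sq_add_norm_sq_add_norm_sq_eq_zero
      (by linarith : ‖a1‖ ^ 2 + ‖a4‖ ^ 2 + ‖a7‖ ^ 2 = 0)
    obtain ⟨rfl, rfl, rfl⟩ := eq_zero_of_norm_sq_add_norm_sq_add_norm_sq_eq_zero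
      (by linarith : ‖a6‖ ^ 2 + ‖a9‖ ^ 2 + ‖a11‖ ^ 2 = 0)
    exact ⟨rfl, rfl, rfl, rfl, rfl, rfl, by linarith⟩
  · rintro ⟨rfl, rfl, rfl, rfl, rfl, rfl, h⟩
    rw [ddbarForm_eq_smul]
    convert zero_smul ℂ _
    rw [Complex.ofReal_eq_zero]
    simp only [diagCoeff, Matrix.of_apply, Matrix.cons_val', Matrix.cons_val,
      Matrix.cons_val_zero, Matrix.cons_val_fin_one, sub_zero]
    linarith

end Coframe

theorem statement7_general (a1 a2 a3 a4 a5 a6 a7 a8 a9 a10 a11 a12 : ℂ) (h8 : a8 = 0)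
    (del delbar : Λ8 →ₗ[ℂ] Λ8)
    -- ∂ and ∂̄ are anti-derivations (odd Leibniz rule on products with 1-forms)
    (hdelL : ∀ (v : Fin 8 → ℂ) (y : Λ8),
      del (ExteriorAlgebra.ι ℂ v * y) = del (ExteriorAlgebra.ι ℂ v) * y
        - ExteriorAlgebra.ι ℂ v * del y)
    (hdelbarL : ∀ (v : Fin 8 → ℂ) (y : Λ8),
      delbar (ExteriorAlgebra.ι ℂ v * y) = delbar (ExteriorAlgebra.ι ℂ v) * y
        - ExteriorAlgebra.ι ℂ v * delbar y)
    -- structure equations: dη^i = 0 for i = 1,2,3, and their conjugates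
    (hclosed : ∀ j : Fin 4, j ≠ 3 →
      del (eta j) = 0 ∧ delbar (eta j) = 0 ∧ del (etb j) = 0 ∧ delbar (etb j) = 0)
    -- ∂η^4 and ∂̄η^4 are the (2,0)- and (1,1)-parts of dη^4
    (hdel4 : del (eta 3) =
      a1 • (eta 0 * eta 1) + a2 • (eta 0 * eta 2) + a6 • (eta 1 * eta 2))
    (hdelbar4 : delbar (eta 3) =
      a3 • (eta 0 * etb 0) + a4 • (eta 0 * etb 1) + a5 • (eta 0 * etb 2)
      + a7 • (eta 1 * etb 0) + a8 • (eta 1 * etb 1) + a9 • (eta 1 * etb 2)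
      + a10 • (eta 2 * etb 0) + a11 • (eta 2 * etb 1) + a12 • (eta 2 * etb 2))
    -- dη̄^4 = conjugate of dη^4, split into its (1,1)- and (0,2)-parts
    (hdelb4 : del (etb 3) =
      (starRingEnd ℂ a3) • (etb 0 * eta 0) + (starRingEnd ℂ a4) • (etb 0 * eta 1)
      + (starRingEnd ℂ a5) • (etb 0 * eta 2) + (starRingEnd ℂ a7) • (etb 1 * eta 0)
      + (starRingEnd ℂ a8) • (etb 1 * eta 1) + (starRingEnd ℂ a9) • (etb 1 * eta 2)
      + (starRingEnd ℂ a10) • (etb 2 * eta 0) + (starRingEnd ℂ a11) • (etb 2 * eta 1)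
      + (starRingEnd ℂ a12) • (etb 2 * eta 2))
    (hdelbarb4 : delbar (etb 3) =
      (starRingEnd ℂ a1) • (etb 0 * etb 1) + (starRingEnd ℂ a2) • (etb 0 * etb 2)
      + (starRingEnd ℂ a6) • (etb 1 * etb 2)) :
    -- ∂∂̄ω = 0 for ω = (i/2)Σ η^j ∧ η̄^j iff the stated conditions on the aᵢ hold
    del (delbar ((Complex.I / 2) • ∑ j : Fin 4, eta j * etb j)) = 0 ↔
      (a1 = 0 ∧ a4 = 0 ∧ a6 = 0 ∧ a7 = 0 ∧ a9 = 0 ∧ a11 = 0 ∧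
        ‖a2‖ ^ 2 + ‖a5‖ ^ 2 + ‖a10‖ ^ 2 =
          2 * (a3 * starRingEnd ℂ a12).re) := by
  subst h8
  have hω : del (delbar (∑ j : Fin 4, eta j * etb j)) =
      ddbarForm !![a3, a4, a5; a7, 0, a9; a10, a11, a12] !![0, a1, a2; 0, 0, a6; 0, 0, 0] := by
    refine del_delbar_sum_eta_mul_etb hdelL hdelbarL hclosed ?_ ?_ ?_ ?_ <;>
      simp [hdel4, hdelbar4, hdelb4, hdelbarb4, twoForm_fin_three, ι_hol, ι_antihol, add_assoc]
  rw [map_smul, map_smul, hω, smul_eq_zero, or_iff_right (by simp [Complex.I_ne_zero])]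
  exact ddbarForm_eq_zero_iff a1 a2 a3 a4 a5 a6 a7 a9 a10 a11 a12

theorem statement7 (a1 a2 a3 a4 a5 a6 a7 a8 a9 a10 a11 a12 : ℂ) (h8 : a8 = 0)
    (del delbar : Λ8 →ₗ[ℂ] Λ8)
    -- ∂ and ∂̄ are anti-derivations (odd Leibniz rule on products with 1-forms)
    (hdelL : ∀ (v : Fin 8 → ℂ) (y : Λ8),
      del (ExteriorAlgebra.ι ℂ v * y) = del (ExteriorAlgebra.ι ℂ v) * y
        - ExteriorAlgebra.ι ℂ v * del y)
    (hdelbarL : ∀ (v : Fin 8 → ℂ) (y : Λ8),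
      delbar (ExteriorAlgebra.ι ℂ v * y) = delbar (ExteriorAlgebra.ι ℂ v) * y
        - ExteriorAlgebra.ι ℂ v * delbar y)
    (hdel1 : del 1 = 0) (hdelbar1 : delbar 1 = 0)
    -- structure equations: dη^i = 0 for i = 1,2,3, and their conjugates
    (hclosed : ∀ j : Fin 4, j ≠ 3 →
      del (eta j) = 0 ∧ delbar (eta j) = 0 ∧ del (etb j) = 0 ∧ delbar (etb j) = 0)
    -- ∂η^4 and ∂̄η^4 are the (2,0)- and (1,1)-parts of dη^4
    (hdel4 : del (eta 3) =
      a1 • (eta 0 * eta 1) + a2 • (eta 0 * eta 2) + a6 • (eta 1 * eta 2))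
    (hdelbar4 : delbar (eta 3) =
      a3 • (eta 0 * etb 0) + a4 • (eta 0 * etb 1) + a5 • (eta 0 * etb 2)
      + a7 • (eta 1 * etb 0) + a8 • (eta 1 * etb 1) + a9 • (eta 1 * etb 2)
      + a10 • (eta 2 * etb 0) + a11 • (eta 2 * etb 1) + a12 • (eta 2 * etb 2))
    -- dη̄^4 = conjugate of dη^4, split into its (1,1)- and (0,2)-parts
    (hdelb4 : del (etb 3) =
      (starRingEnd ℂ a3) • (etb 0 * eta 0) + (starRingEnd ℂ a4) • (etb 0 * eta 1)
      + (starRingEnd ℂ a5) • (etb 0 * eta 2) + (starRingEnd ℂ a7) • (etb 1 * eta 0)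
      + (starRingEnd ℂ a8) • (etb 1 * eta 1) + (starRingEnd ℂ a9) • (etb 1 * eta 2)
      + (starRingEnd ℂ a10) • (etb 2 * eta 0) + (starRingEnd ℂ a11) • (etb 2 * eta 1)
      + (starRingEnd ℂ a12) • (etb 2 * eta 2))
    (hdelbarb4 : delbar (etb 3) =
      (starRingEnd ℂ a1) • (etb 0 * etb 1) + (starRingEnd ℂ a2) • (etb 0 * etb 2)
      + (starRingEnd ℂ a6) • (etb 1 * etb 2)) :
    -- ∂∂̄ω = 0 for ω = (i/2)Σ η^j ∧ η̄^j iff the stated conditions on the aᵢ hold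
    del (delbar ((Complex.I / 2) • ∑ j : Fin 4, eta j * etb j)) = 0 ↔
      (a1 = 0 ∧ a4 = 0 ∧ a6 = 0 ∧ a7 = 0 ∧ a9 = 0 ∧ a11 = 0 ∧
        ‖a2‖ ^ 2 + ‖a5‖ ^ 2 + ‖a10‖ ^ 2 =
          2 * (a3 * starRingEnd ℂ a12).re) :=
  statement7_general a1 a2 a3 a4 a5 a6 a7 a8 a9 a10 a11 a12 h8 del delbar hdelL hdelbarL hclosed
    hdel4 hdelbar4 hdelb4 hdelbarb4
end
end

section
/- In the nilpotent Lie algebra with structure equations dη^i = 0 (i=1,2,3), dη^4 = a_2 η^{13} + a_3 η^{1 1̄} + a_5 η^{1 3̄} + a_{10} η^{3 1̄} + a_{12} η^{3 3̄}, the (0,1)-vector form φ(r,s) = r η̄^1 ⊗ Z_1 + s η̄^3 ⊗ Z_3 (with Z_j dual to η^j) defines an integrable complex structure, i.e., the deformed coframe η^j_{r,s} = η^j + i_{φ}(η^j) satisfies (dη^j_{r,s})^{0,2} = 0 for all j, if and only if −r a_5 + s a_{10} + r s a_2 = 0. -/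
/-!
Since |r| < 1, the relation η^1_{r,s} = η^1 + r η̄^1 and its conjugate can be inverted, and
likewise for η^3; rewriting dη^4 in the deformed coframe and clearing the denominator
(1 - |r|²)(1 - |s|²), its (0,2)-part is (−ra₅ + sa₁₀ + rsa₂) η̄^1_{r,s} ∧ η̄^3_{r,s}, while the
other η^j_{r,s} are closed. For the converse, the wedge of two covectors annihilating every
η^j_{r,s} vanishes on (2,0)- and (1,1)-forms and takes the value −ra₅ + sa₁₀ + rsa₂ on dη^4.
-/

open ExteriorAlgebra

noncomputable section

/-- deformed (1,0)-coframe η^j_{r,s} = η^j + i_{φ(r,s)}η^j -/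
def etaRS (r s : ℂ) : Fin 4 → Λ8 :=
  ![eta 0 + r • etb 0, eta 1, eta 2 + s • etb 2, eta 3]

/-- conjugate deformed coframe η̄^j_{r,s} -/
def etbRS (r s : ℂ) : Fin 4 → Λ8 :=
  ![etb 0 + (starRingEnd ℂ r) • eta 0, etb 1, etb 2 + (starRingEnd ℂ s) • eta 2, etb 3]

namespace ExteriorAlgebra

variable {R M : Type*} [CommRing R] [AddCommGroup M] [Module R M]

def dualWedge (f g : M →ₗ[R] R) : ExteriorAlgebra R M →ₗ[R] R :=
  liftAlternating fun
    | 2 => Matrix.detRowAlternating.compLinearMap (LinearMap.pi ![f, g])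
    | _ => 0

theorem dualWedge_ι_mul_ι (f g : M →ₗ[R] R) (a b : M) :
    dualWedge f g (ι R a * ι R b) = f a * g b - f b * g a := by
  rw [dualWedge, liftAlternating_ι_mul, liftAlternating_ι]
  exact (Matrix.det_fin_two _).trans (by simp [mul_comm])

theorem dualWedge_ι_mul_eq_zero {f g : M →ₗ[R] R} {a : M} (hf : f a = 0) (hg : g a = 0)
    (y : ExteriorAlgebra R M) : dualWedge f g (ι R a * y) = 0 := by
  rw [dualWedge, liftAlternating_ι_mul]
  convert LinearMap.zero_apply y
  rw [← map_zero liftAlternating]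
  congr 1
  funext i
  ext v
  rcases i with _ | _ | i
  · rfl
  · exact (Matrix.det_fin_two _).trans (by simp [hf, hg])
  · rfl

theorem smul_twoForm_eq_deformed (x z x' z' : M) (a2 a3 a5 a10 a12 r s r' s' : R) :
    ((1 - r * r') * (1 - s * s')) • (a2 • (ι R x * ι R z) + a3 • (ι R x * ι R x')
      + a5 • (ι R x * ι R z') + a10 • (ι R z * ι R x') + a12 • (ι R z * ι R z')) =
      (a2 - s' * a5 + r' * a10) • ((ι R x + r • ι R x') * (ι R z + s • ι R z'))
    + (a3 * (1 - s * s')) • ((ι R x + r • ι R x') * (ι R x' + r' • ι R x))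
    + (a5 - s * a2 - s * r' * a10) • ((ι R x + r • ι R x') * (ι R z' + s' • ι R z))
    + (a10 + r * a2 - r * s' * a5) • ((ι R z + s • ι R z') * (ι R x' + r' • ι R x))
    + (a12 * (1 - r * r')) • ((ι R z + s • ι R z') * (ι R z' + s' • ι R z))
    + (-r * a5 + s * a10 + r * s * a2) • ((ι R x' + r' • ι R x) * (ι R z' + s' • ι R z)) := by
  have swap (a b : M) : ι R b * ι R a = -(ι R a * ι R b) :=
    eq_neg_of_add_eq_zero_right (ι_add_mul_swap a b)
  simp only [mul_add, add_mul, smul_mul_assoc, mul_smul_comm, smul_add, smul_smul, ι_sq_zero,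
    swap x z, swap x x', swap z x', swap x' z', swap x z', swap z z', smul_zero, add_zero,
    zero_add, smul_neg]
  match_scalars
  all_goals ring

end ExteriorAlgebra

def forms20And11 (r s : ℂ) : Submodule ℂ Λ8 :=
  Submodule.span ℂ ((Set.range fun p : Fin 4 × Fin 4 => etaRS r s p.1 * etaRS r s p.2) ∪
    (Set.range fun p : Fin 4 × Fin 4 => etaRS r s p.1 * etbRS r s p.2))

def structureForm (a2 a3 a5 a10 a12 : ℂ) : Λ8 :=
  a2 • (eta 0 * eta 2) + a3 • (eta 0 * etb 0) + a5 • (eta 0 * etb 2) + a10 • (eta 2 * etb 0)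
    + a12 • (eta 2 * etb 2)

/-- In the coordinates of `Fin 8 → ℂ`, indices `0, 2, 4, 6` stand for `η^1, η^3, η̄^1, η̄^3`. The
two covectors annihilate every `η^j_{r,s}`, so this functional kills (2,0)- and (1,1)-forms. -/
def zeroTwoFunctional (r s : ℂ) : Λ8 →ₗ[ℂ] ℂ :=
  dualWedge (LinearMap.proj 4 - r • LinearMap.proj 0) (LinearMap.proj 6 - s • LinearMap.proj 2)

theorem exists_etaRS_eq_ι (r s : ℂ) (j : Fin 4) :
    ∃ v : Fin 8 → ℂ, etaRS r s j = ι ℂ v ∧ v 4 = r * v 0 ∧ v 6 = s * v 2 := by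
  fin_cases j
  · exact ⟨Pi.single 0 1 + r • Pi.single 4 1, by simp [etaRS, eta, etb, gen], by simp, by simp⟩
  · exact ⟨Pi.single 1 1, rfl, by simp, by simp⟩
  · exact ⟨Pi.single 2 1 + s • Pi.single 6 1, by simp [etaRS, eta, etb, gen], by simp, by simp⟩
  · exact ⟨Pi.single 3 1, rfl, by simp, by simp⟩

theorem forms20And11_le_ker_zeroTwoFunctional (r s : ℂ) :
    forms20And11 r s ≤ LinearMap.ker (zeroTwoFunctional r s) := by
  rw [forms20And11, Submodule.span_le]
  rintro _ (⟨⟨p, q⟩, rfl⟩ | ⟨⟨p, q⟩, rfl⟩) <;>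
  · obtain ⟨v, hv, hv4, hv6⟩ := exists_etaRS_eq_ι r s p
    rw [SetLike.mem_coe, LinearMap.mem_ker]
    dsimp only
    rw [hv]
    exact dualWedge_ι_mul_eq_zero (by simp [hv4]) (by simp [hv6]) _

theorem zeroTwoFunctional_structureForm (a2 a3 a5 a10 a12 r s : ℂ) :
    zeroTwoFunctional r s (structureForm a2 a3 a5 a10 a12) = -r * a5 + s * a10 + r * s * a2 := by
  simp only [structureForm, eta, etb, gen, zeroTwoFunctional, map_add, map_smul,
    dualWedge_ι_mul_ι]
  simp
  ring

theorem one_sub_mul_conj_ne_zero {z : ℂ} (hz : ‖z‖ < 1) : 1 - z * starRingEnd ℂ z ≠ 0 := by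
  rw [Complex.mul_conj', sub_ne_zero]
  exact_mod_cast (pow_lt_one₀ (norm_nonneg z) hz two_ne_zero).ne'

theorem structureForm_mem_forms20And11_iff (a2 a3 a5 a10 a12 : ℂ) {r s : ℂ}
    (hr : ‖r‖ < 1) (hs : ‖s‖ < 1) :
    structureForm a2 a3 a5 a10 a12 ∈ forms20And11 r s ↔ -r * a5 + s * a10 + r * s * a2 = 0 := by
  refine ⟨fun h => ?_, fun h => ?_⟩
  · rw [← zeroTwoFunctional_structureForm]
    exact forms20And11_le_ker_zeroTwoFunctional r s h
  · have memA (p q : Fin 4) : etaRS r s p * etaRS r s q ∈ forms20And11 r s :=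
      Submodule.subset_span (Set.mem_union_left _ ⟨(p, q), rfl⟩)
    have memB (p q : Fin 4) : etaRS r s p * etbRS r s q ∈ forms20And11 r s :=
      Submodule.subset_span (Set.mem_union_right _ ⟨(p, q), rfl⟩)
    have hD := mul_ne_zero (one_sub_mul_conj_ne_zero hr) (one_sub_mul_conj_ne_zero hs)
    rw [← Submodule.smul_mem_iff _ hD]
    have expand := smul_twoForm_eq_deformed (Pi.single 0 1 : Fin 8 → ℂ)
      (Pi.single 2 1) (Pi.single 4 1) (Pi.single 6 1) a2 a3 a5 a10 a12 r s
      (starRingEnd ℂ r) (starRingEnd ℂ s)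
    rw [h, zero_smul, add_zero] at expand
    refine (congrArg (· ∈ forms20And11 r s) expand).mpr ?_
    exact add_mem (add_mem (add_mem (add_mem (Submodule.smul_mem _ _ (memA 0 2))
      (Submodule.smul_mem _ _ (memB 0 0))) (Submodule.smul_mem _ _ (memB 0 2)))
      (Submodule.smul_mem _ _ (memB 2 0))) (Submodule.smul_mem _ _ (memB 2 2))

theorem statement8_general (a2 a3 a5 a10 a12 : ℂ) (r s : ℂ)
    (hr : ‖r‖ < 1) (hs : ‖s‖ < 1)
    (d : Λ8 →ₗ[ℂ] Λ8)
    (hclosed : ∀ j : Fin 4, j ≠ 3 → d (eta j) = 0 ∧ d (etb j) = 0)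
    (hd4 : d (eta 3) = a2 • (eta 0 * eta 2) + a3 • (eta 0 * etb 0)
      + a5 • (eta 0 * etb 2) + a10 • (eta 2 * etb 0) + a12 • (eta 2 * etb 2)) :
    -- (dη^j_{r,s})^{0,2} = 0 for all j iff −ra₅ + sa₁₀ + rsa₂ = 0
    (∀ j : Fin 4, d (etaRS r s j) ∈ Submodule.span ℂ
        (((Set.range fun p : Fin 4 × Fin 4 => etaRS r s p.1 * etaRS r s p.2) ∪
          (Set.range fun p : Fin 4 × Fin 4 => etaRS r s p.1 * etbRS r s p.2)) : Set Λ8))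
      ↔ -r * a5 + s * a10 + r * s * a2 = 0 := by
  change (∀ j, d (etaRS r s j) ∈ forms20And11 r s) ↔ _
  have hd3 : d (etaRS r s 3) = structureForm a2 a3 a5 a10 a12 := hd4
  have hd_closed (j : Fin 4) (hj : j ≠ 3) : d (etaRS r s j) = 0 := by
    fin_cases j <;> simp_all [etaRS]
  rw [← structureForm_mem_forms20And11_iff a2 a3 a5 a10 a12 hr hs, ← hd3]
  refine ⟨fun h => h 3, fun h j => ?_⟩
  by_cases hj : j = 3
  · exact hj ▸ h
  · exact hd_closed j hj ▸ zero_mem _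

theorem statement8 (a2 a3 a5 a10 a12 : ℂ) (r s : ℂ)
    (hr : ‖r‖ < 1) (hs : ‖s‖ < 1)
    (d : Λ8 →ₗ[ℂ] Λ8)
    (hdL : ∀ (v : Fin 8 → ℂ) (y : Λ8),
      d (ExteriorAlgebra.ι ℂ v * y) = d (ExteriorAlgebra.ι ℂ v) * y
        - ExteriorAlgebra.ι ℂ v * d y)
    (hd1 : d 1 = 0)
    (hclosed : ∀ j : Fin 4, j ≠ 3 → d (eta j) = 0 ∧ d (etb j) = 0)
    (hd4 : d (eta 3) = a2 • (eta 0 * eta 2) + a3 • (eta 0 * etb 0)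
      + a5 • (eta 0 * etb 2) + a10 • (eta 2 * etb 0) + a12 • (eta 2 * etb 2))
    (hdb4 : d (etb 3) = (starRingEnd ℂ a2) • (etb 0 * etb 2)
      + (starRingEnd ℂ a3) • (etb 0 * eta 0) + (starRingEnd ℂ a5) • (etb 0 * eta 2)
      + (starRingEnd ℂ a10) • (etb 2 * eta 0) + (starRingEnd ℂ a12) • (etb 2 * eta 2)) :
    -- (dη^j_{r,s})^{0,2} = 0 for all j iff −ra₅ + sa₁₀ + rsa₂ = 0
    (∀ j : Fin 4, d (etaRS r s j) ∈ Submodule.span ℂ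
        (((Set.range fun p : Fin 4 × Fin 4 => etaRS r s p.1 * etaRS r s p.2) ∪
          (Set.range fun p : Fin 4 × Fin 4 => etaRS r s p.1 * etbRS r s p.2)) : Set Λ8))
      ↔ -r * a5 + s * a10 + r * s * a2 = 0 :=
  statement8_general a2 a3 a5 a10 a12 r s hr hs d hclosed hd4
end
end

section
/- With structure equations dη^i = 0 (i=1,2,3), dη^4 = a_2 η^{13} + a_3 η^{1 1̄} + a_5 η^{1 3̄} + a_{10} η^{3 1̄} + a_{12} η^{3 3̄}, the deformed coframe η^j_{r,s} (η^1_{r,s} = η^1 + rη̄^1, η^2_{r,s} = η^2, η^3_{r,s} = η^3 + sη̄^3, η^4_{r,s} = η^4, |r|,|s| < 1) satisfies dη^4_{r,s} = [(a_2 + r̄a_{10} − s̄a_5)/((1−|r|²)(1−|s|²))] η_{r,s}^{13} + [a_3/(1−|r|²)] η_{r,s}^{1 1̄} + [(a_5 − s a_2 − r̄ s a_{10})/((1−|r|²)(1−|s|²))] η_{r,s}^{1 3̄} + [(a_{10} + r a_2 − r s̄ a_5)/((1−|r|²)(1−|s|²))] η_{r,s}^{3 1̄} + [a_{12}/(1−|s|²)]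 η_{r,s}^{3 3̄} + [(−r a_5 + s a_{10} + r s a_2)/((1−|r|²)(1−|s|²))] η_{r,s}^{1̄ 3̄}. -/
/-!
Expand the products of the deformed coframe in the old coframe: by anticommutation both sides
become combinations of the six products of `η¹, η̄¹, η³, η̄³`, and the coefficients agree once the
denominators `1 - |r|²`, `1 - |s|²` (nonzero since `|r|, |s| < 1`) are cleared. Conjugation plays
no role: the identity holds with `r̄, s̄` replaced by any `r', s'` with `1 - r'r, 1 - s's ≠ 0`.
-/

open ExteriorAlgebra

noncomputable section

namespace ExteriorAlgebra

variable {K M : Type*} [AddCommGroup M]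

theorem ι_mul_ι_swap [CommRing K] [Module K M] (x y : M) : ι K y * ι K x = -(ι K x * ι K y) :=
  eq_neg_of_add_eq_zero_left (ι_add_mul_swap y x)

variable [Field K] [Module K M]

theorem two_form_eq_in_sheared_coframe (e₁ f₁ e₃ f₃ : M) (a₂ a₃ a₅ a₁₀ a₁₂ r r' s s' : K)
    (hr : 1 - r' * r ≠ 0) (hs : 1 - s' * s ≠ 0) :
    a₂ • (ι K e₁ * ι K e₃) + a₃ • (ι K e₁ * ι K f₁) + a₅ • (ι K e₁ * ι K f₃)
        + a₁₀ • (ι K e₃ * ι K f₁) + a₁₂ • (ι K e₃ * ι K f₃) =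
      ((a₂ + r' * a₁₀ - s' * a₅) / ((1 - r' * r) * (1 - s' * s)))
          • ((ι K e₁ + r • ι K f₁) * (ι K e₃ + s • ι K f₃))
        + (a₃ / (1 - r' * r)) • ((ι K e₁ + r • ι K f₁) * (ι K f₁ + r' • ι K e₁))
        + ((a₅ - s * a₂ - r' * s * a₁₀) / ((1 - r' * r) * (1 - s' * s)))
          • ((ι K e₁ + r • ι K f₁) * (ι K f₃ + s' • ι K e₃))
        + ((a₁₀ + r * a₂ - r * s' * a₅) / ((1 - r' * r) * (1 - s' * s)))
          • ((ι K e₃ + s • ι K f₃) * (ι K f₁ + r' • ι K e₁))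
        + (a₁₂ / (1 - s' * s)) • ((ι K e₃ + s • ι K f₃) * (ι K f₃ + s' • ι K e₃))
        + ((-r * a₅ + s * a₁₀ + r * s * a₂) / ((1 - r' * r) * (1 - s' * s)))
          • ((ι K f₁ + r' • ι K e₁) * (ι K f₃ + s' • ι K e₃)) := by
  simp only [mul_add, add_mul, smul_mul_assoc, mul_smul_comm, ι_sq_zero,
    ι_mul_ι_swap e₁ e₃, ι_mul_ι_swap e₁ f₁, ι_mul_ι_swap e₁ f₃, ι_mul_ι_swap e₃ f₁,
    ι_mul_ι_swap e₃ f₃, ι_mul_ι_swap f₁ f₃, smul_neg, smul_zero]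
  match_scalars <;> field_simp <;> ring

end ExteriorAlgebra

theorem Complex.one_sub_conj_mul_ne_zero {z : ℂ} (hz : ‖z‖ < 1) :
    1 - starRingEnd ℂ z * z ≠ 0 := by
  rw [Complex.conj_mul', sub_ne_zero, ne_comm]
  exact_mod_cast (pow_lt_one₀ (norm_nonneg z) hz two_ne_zero).ne

theorem statement9_general (a2 a3 a5 a10 a12 : ℂ) (r s : ℂ)
    (hr : ‖r‖ < 1) (hs : ‖s‖ < 1)
    (d : Λ8 →ₗ[ℂ] Λ8)
    (hd4 : d (eta 3) = a2 • (eta 0 * eta 2) + a3 • (eta 0 * etb 0)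
      + a5 • (eta 0 * etb 2) + a10 • (eta 2 * etb 0) + a12 • (eta 2 * etb 2)) :
    d (etaRS r s 3) =
      ((a2 + (starRingEnd ℂ r) * a10 - (starRingEnd ℂ s) * a5) /
          (((1 - Complex.normSq r) * (1 - Complex.normSq s) : ℝ) : ℂ))
        • (etaRS r s 0 * etaRS r s 2)
      + (a3 / (((1 - Complex.normSq r : ℝ)) : ℂ)) • (etaRS r s 0 * etbRS r s 0)
      + ((a5 - s * a2 - (starRingEnd ℂ r) * s * a10) /
          (((1 - Complex.normSq r) * (1 - Complex.normSq s) : ℝ) : ℂ))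
        • (etaRS r s 0 * etbRS r s 2)
      + ((a10 + r * a2 - r * (starRingEnd ℂ s) * a5) /
          (((1 - Complex.normSq r) * (1 - Complex.normSq s) : ℝ) : ℂ))
        • (etaRS r s 2 * etbRS r s 0)
      + (a12 / (((1 - Complex.normSq s : ℝ)) : ℂ)) • (etaRS r s 2 * etbRS r s 2)
      + ((-r * a5 + s * a10 + r * s * a2) /
          (((1 - Complex.normSq r) * (1 - Complex.normSq s) : ℝ) : ℂ))
        • (etbRS r s 0 * etbRS r s 2) := by
  rw [show etaRS r s 3 = eta 3 from rfl, hd4]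
  simp only [Complex.ofReal_mul, Complex.ofReal_sub, Complex.ofReal_one,
    Complex.normSq_eq_conj_mul_self]
  exact ExteriorAlgebra.two_form_eq_in_sheared_coframe _ _ _ _ a2 a3 a5 a10 a12 r _ s _
    (Complex.one_sub_conj_mul_ne_zero hr) (Complex.one_sub_conj_mul_ne_zero hs)

theorem statement9 (a2 a3 a5 a10 a12 : ℂ) (r s : ℂ)
    (hr : ‖r‖ < 1) (hs : ‖s‖ < 1)
    (d : Λ8 →ₗ[ℂ] Λ8)
    (hdL : ∀ (v : Fin 8 → ℂ) (y : Λ8),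
      d (ExteriorAlgebra.ι ℂ v * y) = d (ExteriorAlgebra.ι ℂ v) * y
        - ExteriorAlgebra.ι ℂ v * d y)
    (hd1 : d 1 = 0)
    (hclosed : ∀ j : Fin 4, j ≠ 3 → d (eta j) = 0 ∧ d (etb j) = 0)
    (hd4 : d (eta 3) = a2 • (eta 0 * eta 2) + a3 • (eta 0 * etb 0)
      + a5 • (eta 0 * etb 2) + a10 • (eta 2 * etb 0) + a12 • (eta 2 * etb 2))
    (hdb4 : d (etb 3) = (starRingEnd ℂ a2) • (etb 0 * etb 2)
      + (starRingEnd ℂ a3) • (etb 0 * eta 0) + (starRingEnd ℂ a5) • (etb 0 * eta 2)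
      + (starRingEnd ℂ a10) • (etb 2 * eta 0) + (starRingEnd ℂ a12) • (etb 2 * eta 2)) :
    d (etaRS r s 3) =
      ((a2 + (starRingEnd ℂ r) * a10 - (starRingEnd ℂ s) * a5) /
          (((1 - Complex.normSq r) * (1 - Complex.normSq s) : ℝ) : ℂ))
        • (etaRS r s 0 * etaRS r s 2)
      + (a3 / (((1 - Complex.normSq r : ℝ)) : ℂ)) • (etaRS r s 0 * etbRS r s 0)
      + ((a5 - s * a2 - (starRingEnd ℂ r) * s * a10) /
          (((1 - Complex.normSq r) * (1 - Complex.normSq s) : ℝ) : ℂ))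
        • (etaRS r s 0 * etbRS r s 2)
      + ((a10 + r * a2 - r * (starRingEnd ℂ s) * a5) /
          (((1 - Complex.normSq r) * (1 - Complex.normSq s) : ℝ) : ℂ))
        • (etaRS r s 2 * etbRS r s 0)
      + (a12 / (((1 - Complex.normSq s : ℝ)) : ℂ)) • (etaRS r s 2 * etbRS r s 2)
      + ((-r * a5 + s * a10 + r * s * a2) /
          (((1 - Complex.normSq r) * (1 - Complex.normSq s) : ℝ) : ℂ))
        • (etbRS r s 0 * etbRS r s 2) :=
  statement9_general a2 a3 a5 a10 a12 r s hr hs d hd4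
end
end

section
/- In the nilpotent differential bigraded algebra with dη^i = 0 (i=1,2,3), dη^4 = a_2 η^{13} + a_3 η^{1 1̄} + a_5 η^{1 3̄} + a_{10} η^{3 1̄} + a_{12} η^{3 3̄}, let ω = (i/2) Σ_{j=1}^4 η^{j j̄} and let φ'(0) = (u a_{10}/a_5) η̄^1 ⊗ Z_1 + u η̄^3 ⊗ Z_3 with a_5 ≠ 0, u ∈ ℂ. Then ∂(i_{φ'(0)}(∂ω)) = i u a_2 (|a_{10}|² − |a_5|²)/a_5 · η^{13 1̄ 3̄}. -/
/-!
STATEMENT 11: With dη^i = 0 (i=1,2,3),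
dη^4 = a₂η^{13} + a₃η^{11̄} + a₅η^{13̄} + a₁₀η^{31̄} + a₁₂η^{33̄},
ω = (i/2)Σ η^{jj̄}, and φ'(0) = (ua₁₀/a₅)η̄^1 ⊗ Z₁ + uη̄^3 ⊗ Z₃ (a₅ ≠ 0), one has
∂(i_{φ'(0)}(∂ω)) = i u a₂ (|a₁₀|² − |a₅|²)/a₅ · η^{131̄3̄}.
The contraction i_ψ by a (0,1)-vector form is an (even) derivation of the exterior
algebra determined by its values on the coframe.
-/

open ExteriorAlgebra

noncomputable section

set_option maxHeartbeats 1000000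

lemma gen_sq (i : Fin 8) : gen i * gen i = 0 := ExteriorAlgebra.ι_sq_zero _

lemma gen_swap (i j : Fin 8) : gen i * gen j = -(gen j * gen i) :=
  eq_neg_of_add_eq_zero_left (ExteriorAlgebra.ι_add_mul_swap _ _)

lemma self_mul (i : Fin 8) (x : Λ8) : gen i * (gen i * x) = 0 := by
  rw [← mul_assoc, gen_sq, zero_mul]

lemma gen_swap' {i j : Fin 8} (_h : j < i) : gen i * gen j = -(gen j * gen i) :=
  gen_swap i j

lemma swap_mul {i j : Fin 8} (_h : j < i) (x : Λ8) :
    gen i * (gen j * x) = -(gen j * (gen i * x)) := by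
  rw [← mul_assoc, gen_swap i j, neg_mul, mul_assoc]

theorem statement11 (a2 a3 a5 a10 a12 u : ℂ) (ha5 : a5 ≠ 0)
    (del : Λ8 →ₗ[ℂ] Λ8)
    -- ∂ is an anti-derivation
    (hdelL : ∀ (v : Fin 8 → ℂ) (y : Λ8),
      del (ExteriorAlgebra.ι ℂ v * y) = del (ExteriorAlgebra.ι ℂ v) * y
        - ExteriorAlgebra.ι ℂ v * del y)
    (hdel1 : del 1 = 0)
    -- (1,0)-parts of the structure equations and of their conjugates
    (hclosed : ∀ j : Fin 4, j ≠ 3 → del (eta j) = 0 ∧ del (etb j) = 0)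
    (hdel4 : del (eta 3) = a2 • (eta 0 * eta 2))
    (hdelb4 : del (etb 3) =
      (starRingEnd ℂ a3) • (etb 0 * eta 0) + (starRingEnd ℂ a5) • (etb 0 * eta 2)
      + (starRingEnd ℂ a10) • (etb 2 * eta 0) + (starRingEnd ℂ a12) • (etb 2 * eta 2))
    -- i_{φ'(0)} is the derivation with i(η^1) = (ua₁₀/a₅)η̄^1, i(η^3) = uη̄^3
    (iφ : Λ8 →ₗ[ℂ] Λ8)
    (hiDer : ∀ x y : Λ8, iφ (x * y) = iφ x * y + x * iφ y)
    (hi1 : iφ (eta 0) = (u * a10 / a5) • etb 0)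
    (hi3 : iφ (eta 2) = u • etb 2)
    (hi2 : iφ (eta 1) = 0) (hi4 : iφ (eta 3) = 0)
    (hib : ∀ j : Fin 4, iφ (etb j) = 0) :
    del (iφ (del ((Complex.I / 2) • ∑ j : Fin 4, eta j * etb j))) =
      (Complex.I * u * a2 * (((Complex.normSq a10 - Complex.normSq a5 : ℝ)) : ℂ) / a5)
        • (eta 0 * eta 2 * etb 0 * etb 2) := by
  have hdelG : ∀ (i : Fin 8) (y : Λ8),
      del (gen i * y) = del (gen i) * y - gen i * del y := fun i y => hdelL _ y
  have d0 : del (gen 0) = 0 := (hclosed 0 (by decide)).1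
  have d1 : del (gen 1) = 0 := (hclosed 1 (by decide)).1
  have d2 : del (gen 2) = 0 := (hclosed 2 (by decide)).1
  have d4 : del (gen 4) = 0 := (hclosed 0 (by decide)).2
  have d5 : del (gen 5) = 0 := (hclosed 1 (by decide)).2
  have d6 : del (gen 6) = 0 := (hclosed 2 (by decide)).2
  have d3 : del (gen 3) = a2 • (gen 0 * gen 2) := hdel4
  have d7 : del (gen 7) =
      (starRingEnd ℂ a3) • (gen 4 * gen 0) + (starRingEnd ℂ a5) • (gen 4 * gen 2)
      + (starRingEnd ℂ a10) • (gen 6 * gen 0) + (starRingEnd ℂ a12) • (gen 6 * gen 2) :=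
    hdelb4
  have i0 : iφ (gen 0) = (u * a10 / a5) • gen 4 := hi1
  have i2 : iφ (gen 2) = u • gen 6 := hi3
  have i1 : iφ (gen 1) = 0 := hi2
  have i3 : iφ (gen 3) = 0 := hi4
  have i4 : iφ (gen 4) = 0 := hib 0
  have i5 : iφ (gen 5) = 0 := hib 1
  have i6 : iφ (gen 6) = 0 := hib 2
  have i7 : iφ (gen 7) = 0 := hib 3
  show del (iφ (del ((Complex.I / 2) • ∑ j : Fin 4, eta j * etb j))) =
      (Complex.I * u * a2 * (((Complex.normSq a10 - Complex.normSq a5 : ℝ)) : ℂ) / a5)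
        • (gen 0 * gen 2 * gen 4 * gen 6)
  have hsum : (∑ j : Fin 4, eta j * etb j)
      = gen 0 * gen 4 + gen 1 * gen 5 + gen 2 * gen 6 + gen 3 * gen 7 :=
    Fin.sum_univ_four _
  rw [map_smul, hsum]
  simp (config := { decide := true }) only [map_add, map_smul, map_sub, hdelG, hiDer,
    d0, d1, d2, d3, d4, d5, d6, d7,
    i0, i1, i2, i3, i4, i5, i6, i7, smul_mul_assoc, mul_smul_comm, smul_smul,
    zero_mul, mul_zero, zero_add, add_zero, sub_zero, zero_sub, smul_zero, map_zero,
    neg_mul, mul_neg, smul_neg, neg_neg, map_neg, neg_zero, smul_add, mul_add, add_mul,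
    sub_mul, mul_sub, neg_add_rev, mul_assoc,
    gen_swap', swap_mul, self_mul, gen_sq]
  match_scalars
  rw [← Complex.mul_conj, ← Complex.mul_conj]
  field_simp
  ring
end
end

section
/- On the nilpotent Lie algebra with dη^1 = dη^2 = 0, dη^3 = −(1/2)η^{1 1̄}, dη^4 = −(1/2)η^{2 2̄}, let φ'(0) = a_{11} η̄^1⊗Z_1 + a_{22} η̄^2⊗Z_2 + a_{32} η̄^2⊗Z_3 + a_{33} η̄^3⊗Z_3 + a_{34} η̄^4⊗Z_3 + a_{41} η̄^1⊗Z_4 + a_{43} η̄^3⊗Z_4 + a_{44} η̄^4⊗Z_4 and ω the invariant Hermitian form with coefficients α_{j k̄}, α_{3 4̄} real. Then 2i·Im((∂ ∘ i_{φ'(0)} ∘ ∂)(ω)) = (1/8)[ i α_{3 3̄}(a_{34} + ā_{34}) + i α_{4 4̄}(a_{43} + ā_{43}) + α_{3 4̄}(a_{33} + ā_{44}) − ᾱ_{3 4̄}(a_{44} + ā_{33}) ] η^{12 1̄ 2̄}. -/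
/-!
STATEMENT 15: On the nilpotent Lie algebra with dη^1 = dη^2 = 0, dη^3 = −(1/2)η^{11̄},
dη^4 = −(1/2)η^{22̄}, for
φ'(0) = a₁₁η̄^1⊗Z₁ + a₂₂η̄^2⊗Z₂ + a₃₂η̄^2⊗Z₃ + a₃₃η̄^3⊗Z₃ + a₃₄η̄^4⊗Z₃
       + a₄₁η̄^1⊗Z₄ + a₄₃η̄^3⊗Z₄ + a₄₄η̄^4⊗Z₄
and ω the invariant Hermitian form with coefficients α_{jk̄}, with α_{34̄} real,
2i·Im((∂ ∘ i_{φ'(0)} ∘ ∂)(ω)) =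
(1/8)[iα_{33̄}(a₃₄+ā₃₄) + iα_{44̄}(a₄₃+ā₄₃) + α_{34̄}(a₃₃+ā₄₄) − ᾱ_{34̄}(a₄₄+ā₃₃)] η^{121̄2̄}.
Here 2i·Im(X) = X − X̄ and conjugation of forms is the ring map fixing real scalars and
interchanging η^j and η̄^j.
-/

open ExteriorAlgebra

noncomputable section

set_option maxHeartbeats 2000000 in
theorem statement15 (a11 a22 a32 a33 a34 a41 a43 a44 : ℂ)
    (α1 α2 α3 α4 : ℝ) (α12 α13 α14 α23 α24 : ℂ) (α34 : ℝ)
    (del : Λ8 →ₗ[ℂ] Λ8)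
    (hdelL : ∀ (v : Fin 8 → ℂ) (y : Λ8),
      del (ExteriorAlgebra.ι ℂ v * y) = del (ExteriorAlgebra.ι ℂ v) * y
        - ExteriorAlgebra.ι ℂ v * del y)
    (hdel1 : del 1 = 0)
    -- ∂-parts of the structure equations and of their conjugates
    (hdel : ∀ j : Fin 4, del (eta j) = 0)
    (hd1 : del (etb 0) = 0) (hd2 : del (etb 1) = 0)
    (hd3 : del (etb 2) = -(1 / 2 : ℂ) • (etb 0 * eta 0))
    (hd4 : del (etb 3) = -(1 / 2 : ℂ) • (etb 1 * eta 1))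
    -- the contraction i_{φ'(0)}: an even derivation given on the coframe
    (iφ : Λ8 →ₗ[ℂ] Λ8)
    (hiDer : ∀ x y : Λ8, iφ (x * y) = iφ x * y + x * iφ y)
    (hi1 : iφ (eta 0) = a11 • etb 0)
    (hi2 : iφ (eta 1) = a22 • etb 1)
    (hi3 : iφ (eta 2) = a32 • etb 1 + a33 • etb 2 + a34 • etb 3)
    (hi4 : iφ (eta 3) = a41 • etb 0 + a43 • etb 2 + a44 • etb 3)
    (hib : ∀ j : Fin 4, iφ (etb j) = 0)
    -- conjugation of forms: additive, ℂ-antilinear, multiplicative, swaps η^j and η̄^j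
    (conjF : Λ8 → Λ8)
    (hcadd : ∀ x y : Λ8, conjF (x + y) = conjF x + conjF y)
    (hcsmul : ∀ (c : ℂ) (x : Λ8), conjF (c • x) = (starRingEnd ℂ c) • conjF x)
    (hcmul : ∀ x y : Λ8, conjF (x * y) = conjF x * conjF y)
    (hceta : ∀ j : Fin 4, conjF (eta j) = etb j)
    (hcetb : ∀ j : Fin 4, conjF (etb j) = eta j)
    -- ω = (i/2)Σ α_{jj̄} η^{jj̄} + (1/2)Σ_{j<k}(α_{jk̄} η^{jk̄} − ᾱ_{jk̄} η^{kj̄})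
    (ω : Λ8)
    (hω : ω = (Complex.I / 2) • ((α1 : ℂ) • (eta 0 * etb 0) + (α2 : ℂ) • (eta 1 * etb 1)
          + (α3 : ℂ) • (eta 2 * etb 2) + (α4 : ℂ) • (eta 3 * etb 3))
        + (1 / 2 : ℂ) •
          (α12 • (eta 0 * etb 1) - (starRingEnd ℂ α12) • (eta 1 * etb 0)
          + α13 • (eta 0 * etb 2) - (starRingEnd ℂ α13) • (eta 2 * etb 0)
          + α14 • (eta 0 * etb 3) - (starRingEnd ℂ α14) • (eta 3 * etb 0)
          + α23 • (eta 1 * etb 2) - (starRingEnd ℂ α23) • (eta 2 * etb 1)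
          + α24 • (eta 1 * etb 3) - (starRingEnd ℂ α24) • (eta 3 * etb 1)
          + (α34 : ℂ) • (eta 2 * etb 3)
          - (starRingEnd ℂ (α34 : ℂ)) • (eta 3 * etb 2))) :
    -- 2i·Im((∂ ∘ i_{φ'(0)} ∘ ∂)(ω)) equals the stated multiple of η^{121̄2̄}
    del (iφ (del ω)) - conjF (del (iφ (del ω)))
    = ((1 / 8 : ℂ) *
        (Complex.I * (α3 : ℂ) * (a34 + starRingEnd ℂ a34)
          + Complex.I * (α4 : ℂ) * (a43 + starRingEnd ℂ a43)
          + (α34 : ℂ) * (a33 + starRingEnd ℂ a44)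
          - (starRingEnd ℂ (α34 : ℂ)) * (a44 + starRingEnd ℂ a33)))
      • (eta 0 * eta 1 * etb 0 * etb 1) := by
  have e0 : eta 0 = gen 0 := rfl
  have e1 : eta 1 = gen 1 := rfl
  have e2 : eta 2 = gen 2 := rfl
  have e3 : eta 3 = gen 3 := rfl
  have b0 : etb 0 = gen 4 := rfl
  have b1 : etb 1 = gen 5 := rfl
  have b2 : etb 2 = gen 6 := rfl
  have b3 : etb 3 = gen 7 := rfl
  have hswap : ∀ j k : Fin 8, gen j * gen k = -(gen k * gen j) := fun j k =>
    eq_neg_of_add_eq_zero_left (ExteriorAlgebra.ι_add_mul_swap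
      ((Pi.single j 1 : Fin 8 → ℂ)) ((Pi.single k 1 : Fin 8 → ℂ)))
  have hswap' : ∀ (j k : Fin 8) (x : Λ8), gen j * (gen k * x) = -(gen k * (gen j * x)) := by
    intro j k x; rw [← mul_assoc, hswap j k, neg_mul, mul_assoc]
  have gsq : ∀ j : Fin 8, gen j * gen j = 0 := fun j => ExteriorAlgebra.ι_sq_zero _
  have gsq' : ∀ (j : Fin 8) (x : Λ8), gen j * (gen j * x) = 0 := by
    intro j x; rw [← mul_assoc, gsq, zero_mul]
  have hs10 := hswap (1:Fin 8) 0
  have ht10 := hswap' (1:Fin 8) 0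
  have hs20 := hswap (2:Fin 8) 0
  have ht20 := hswap' (2:Fin 8) 0
  have hs21 := hswap (2:Fin 8) 1
  have ht21 := hswap' (2:Fin 8) 1
  have hs30 := hswap (3:Fin 8) 0
  have ht30 := hswap' (3:Fin 8) 0
  have hs31 := hswap (3:Fin 8) 1
  have ht31 := hswap' (3:Fin 8) 1
  have hs32 := hswap (3:Fin 8) 2
  have ht32 := hswap' (3:Fin 8) 2
  have hs40 := hswap (4:Fin 8) 0
  have ht40 := hswap' (4:Fin 8) 0
  have hs41 := hswap (4:Fin 8) 1
  have ht41 := hswap' (4:Fin 8) 1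
  have hs42 := hswap (4:Fin 8) 2
  have ht42 := hswap' (4:Fin 8) 2
  have hs43 := hswap (4:Fin 8) 3
  have ht43 := hswap' (4:Fin 8) 3
  have hs50 := hswap (5:Fin 8) 0
  have ht50 := hswap' (5:Fin 8) 0
  have hs51 := hswap (5:Fin 8) 1
  have ht51 := hswap' (5:Fin 8) 1
  have hs52 := hswap (5:Fin 8) 2
  have ht52 := hswap' (5:Fin 8) 2
  have hs53 := hswap (5:Fin 8) 3
  have ht53 := hswap' (5:Fin 8) 3
  have hs54 := hswap (5:Fin 8) 4
  have ht54 := hswap' (5:Fin 8) 4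
  have hs60 := hswap (6:Fin 8) 0
  have ht60 := hswap' (6:Fin 8) 0
  have hs61 := hswap (6:Fin 8) 1
  have ht61 := hswap' (6:Fin 8) 1
  have hs62 := hswap (6:Fin 8) 2
  have ht62 := hswap' (6:Fin 8) 2
  have hs63 := hswap (6:Fin 8) 3
  have ht63 := hswap' (6:Fin 8) 3
  have hs64 := hswap (6:Fin 8) 4
  have ht64 := hswap' (6:Fin 8) 4
  have hs65 := hswap (6:Fin 8) 5
  have ht65 := hswap' (6:Fin 8) 5
  have hs70 := hswap (7:Fin 8) 0
  have ht70 := hswap' (7:Fin 8) 0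
  have hs71 := hswap (7:Fin 8) 1
  have ht71 := hswap' (7:Fin 8) 1
  have hs72 := hswap (7:Fin 8) 2
  have ht72 := hswap' (7:Fin 8) 2
  have hs73 := hswap (7:Fin 8) 3
  have ht73 := hswap' (7:Fin 8) 3
  have hs74 := hswap (7:Fin 8) 4
  have ht74 := hswap' (7:Fin 8) 4
  have hs75 := hswap (7:Fin 8) 5
  have ht75 := hswap' (7:Fin 8) 5
  have hs76 := hswap (7:Fin 8) 6
  have ht76 := hswap' (7:Fin 8) 6
  have hdelg : ∀ (j : Fin 8) (y : Λ8), del (gen j * y) = del (gen j) * y - gen j * del y :=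
    fun j y => hdelL (Pi.single j 1) y
  have hg0 : del (gen 0) = 0 := hdel 0
  have hg1 : del (gen 1) = 0 := hdel 1
  have hg2 : del (gen 2) = 0 := hdel 2
  have hg3 : del (gen 3) = 0 := hdel 3
  have hg4 : del (gen 4) = 0 := hd1
  have hg5 : del (gen 5) = 0 := hd2
  have hg6 : del (gen 6) = -(1 / 2 : ℂ) • (gen 4 * gen 0) := hd3
  have hg7 : del (gen 7) = -(1 / 2 : ℂ) • (gen 5 * gen 1) := hd4
  have hig0 : iφ (gen 0) = a11 • gen 4 := hi1
  have hig1 : iφ (gen 1) = a22 • gen 5 := hi2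
  have hig2 : iφ (gen 2) = a32 • gen 5 + a33 • gen 6 + a34 • gen 7 := hi3
  have hig3 : iφ (gen 3) = a41 • gen 4 + a43 • gen 6 + a44 • gen 7 := hi4
  have hig4 : iφ (gen 4) = 0 := hib 0
  have hig5 : iφ (gen 5) = 0 := hib 1
  have hig6 : iφ (gen 6) = 0 := hib 2
  have hig7 : iφ (gen 7) = 0 := hib 3
  have hcg0 : conjF (gen 0) = gen 4 := hceta 0
  have hcg1 : conjF (gen 1) = gen 5 := hceta 1
  have hcg2 : conjF (gen 2) = gen 6 := hceta 2
  have hcg3 : conjF (gen 3) = gen 7 := hceta 3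
  have hcg4 : conjF (gen 4) = gen 0 := hcetb 0
  have hcg5 : conjF (gen 5) = gen 1 := hcetb 1
  have hcg6 : conjF (gen 6) = gen 2 := hcetb 2
  have hcg7 : conjF (gen 7) = gen 3 := hcetb 3
  have hc0 : conjF 0 = 0 := by
    have h := hcsmul 0 0; simpa using h
  have hcneg : ∀ x : Λ8, conjF (-x) = -(conjF x) := by
    intro x; have h := hcsmul (-1) x; simpa using h
  have hcsub : ∀ x y : Λ8, conjF (x - y) = conjF x - conjF y := by
    intro x y; rw [sub_eq_add_neg, hcadd, hcneg, sub_eq_add_neg]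
  subst hω
  simp only [e0, e1, e2, e3, b0, b1, b2, b3]
  simp only [map_add, map_sub, map_smul, map_neg, smul_mul_assoc, mul_smul_comm, mul_assoc,
    hdelg, hg0, hg1, hg2, hg3, hg4, hg5, hg6, hg7, hiDer, hig0, hig1, hig2, hig3, hig4,
    hig5, hig6, hig7, hcadd, hcsmul, hcmul, hcsub, hcneg, hc0, hcg0, hcg1, hcg2, hcg3,
    hcg4, hcg5, hcg6, hcg7, gsq, gsq', hs10, ht10, hs20, ht20, hs21, ht21, hs30, ht30, hs31, ht31, hs32, ht32, hs40, ht40, hs41, ht41, hs42, ht42, hs43, ht43, hs50, ht50, hs51, ht51, hs52, ht52, hs53, ht53, hs54, ht54, hs60, ht60, hs61, ht61, hs62, ht62, hs63, ht63, hs64, ht64, hs65, ht65, hs70, ht70, hs71, ht71, hs72, ht72, hs73, ht73, hs74, ht74, hs75, ht75, hs76, ht76,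
    mul_add, mul_sub, mul_neg, neg_mul, add_mul, sub_mul, mul_zero, zero_mul, smul_zero,
    zero_smul, neg_zero, add_zero, zero_add, smul_smul, neg_neg, smul_neg, neg_smul,
    sub_zero, zero_sub, map_zero]
  match_scalars
  simp only [map_mul, map_add, map_sub, map_neg, map_div₀, map_one, map_ofNat,
    Complex.conj_I, Complex.conj_ofReal, Complex.conj_conj]
  ring
end
end

section
/- On the nilpotent Lie algebra with dη^1 = dη^2 = 0, dη^3 = −(1/2)η^{1 1̄}, dη^4 = −(1/2)η^{2 2̄}, one has ∂∂̄(η^3 ∧ η̄^4) = (1/4) η^{12 1̄ 2̄}; consequently the real (2,2)-form η^{12 1̄ 2̄} is ∂∂̄-exact, hence represents the zero class in Bott-Chern cohomology H^{2,2}_{BC}. -/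
/-!
STATEMENT 16: On the nilpotent Lie algebra with dη^1 = dη^2 = 0, dη^3 = −(1/2)η^{11̄},
dη^4 = −(1/2)η^{22̄}, one has ∂∂̄(η^3 ∧ η̄^4) = (1/4)η^{121̄2̄}; consequently the real
(2,2)-form η^{121̄2̄} is ∂∂̄-exact (and ∂- and ∂̄-closed), hence represents the zero
class in Bott-Chern cohomology H^{2,2}_{BC} = (ker ∂ ∩ ker ∂̄)/im ∂∂̄.
-/

set_option maxHeartbeats 2000000 in
open ExteriorAlgebra

noncomputable section

set_option maxHeartbeats 2000000 in
theorem statement16 (del delbar : Λ8 →ₗ[ℂ] Λ8)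
    (hdelL : ∀ (v : Fin 8 → ℂ) (y : Λ8),
      del (ExteriorAlgebra.ι ℂ v * y) = del (ExteriorAlgebra.ι ℂ v) * y
        - ExteriorAlgebra.ι ℂ v * del y)
    (hdelbarL : ∀ (v : Fin 8 → ℂ) (y : Λ8),
      delbar (ExteriorAlgebra.ι ℂ v * y) = delbar (ExteriorAlgebra.ι ℂ v) * y
        - ExteriorAlgebra.ι ℂ v * delbar y)
    (hdel1 : del 1 = 0) (hdelbar1 : delbar 1 = 0)
    (hdel : ∀ j : Fin 4, del (eta j) = 0)
    (hdelbarb : ∀ j : Fin 4, delbar (etb j) = 0)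
    (hdb1 : delbar (eta 0) = 0) (hdb2 : delbar (eta 1) = 0)
    (hdb3 : delbar (eta 2) = -(1 / 2 : ℂ) • (eta 0 * etb 0))
    (hdb4 : delbar (eta 3) = -(1 / 2 : ℂ) • (eta 1 * etb 1))
    (hd1 : del (etb 0) = 0) (hd2 : del (etb 1) = 0)
    (hd3 : del (etb 2) = -(1 / 2 : ℂ) • (etb 0 * eta 0))
    (hd4 : del (etb 3) = -(1 / 2 : ℂ) • (etb 1 * eta 1)) :
    del (delbar (eta 2 * etb 3)) = (1 / 4 : ℂ) • (eta 0 * eta 1 * etb 0 * etb 1) ∧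
    del (eta 0 * eta 1 * etb 0 * etb 1) = 0 ∧
    delbar (eta 0 * eta 1 * etb 0 * etb 1) = 0 ∧
    ∃ γ : Λ8, eta 0 * eta 1 * etb 0 * etb 1 = del (delbar γ) := by

  have Le : ∀ (j : Fin 4) (y : Λ8), del (eta j * y) = del (eta j) * y - eta j * del y :=
    fun j y => hdelL _ y
  have Leb : ∀ (j : Fin 4) (y : Λ8), del (etb j * y) = del (etb j) * y - etb j * del y :=
    fun j y => hdelL _ y
  have Lbe : ∀ (j : Fin 4) (y : Λ8), delbar (eta j * y) = delbar (eta j) * y - eta j * delbar y :=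
    fun j y => hdelbarL _ y
  have Lbeb : ∀ (j : Fin 4) (y : Λ8), delbar (etb j * y) = delbar (etb j) * y - etb j * delbar y :=
    fun j y => hdelbarL _ y
  have sw : ∀ (i j : Fin 8), gen i * gen j = -(gen j * gen i) := fun i j =>
    eq_neg_of_add_eq_zero_left
      (ExteriorAlgebra.ι_add_mul_swap (R := ℂ) (M := Fin 8 → ℂ)
        (Pi.single i 1) (Pi.single j 1))
  have h1 : etb 1 * eta 1 = -(eta 1 * etb 1) := sw _ _
  have h2 : etb 0 * eta 1 = -(eta 1 * etb 0) := sw _ _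
  have key : etb 0 * (etb 1 * eta 1) = eta 1 * (etb 0 * etb 1) := by
    rw [h1, mul_neg, ← mul_assoc, h2, neg_mul, neg_neg, mul_assoc]
  have step : delbar (eta 2 * etb 3) = -(1/2 : ℂ) • (eta 0 * (etb 0 * etb 3)) := by
    rw [Lbe, hdb3, hdelbarb, mul_zero, sub_zero, smul_mul_assoc, mul_assoc]
  have stepb : del (etb 0 * etb 3) = (1/2 : ℂ) • (etb 0 * (etb 1 * eta 1)) := by
    rw [Leb, hd1, hd4, zero_mul, zero_sub, mul_smul_comm, ← neg_smul, neg_neg]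
  have assoc4 : eta 0 * eta 1 * etb 0 * etb 1 = eta 0 * (eta 1 * (etb 0 * etb 1)) := by
    rw [mul_assoc, mul_assoc]
  have main : del (delbar (eta 2 * etb 3)) = (1/4:ℂ) • (eta 0 * eta 1 * etb 0 * etb 1) := by
    rw [step, map_smul, Le, hdel, zero_mul, zero_sub, stepb, key, mul_smul_comm, assoc4]
    module
  have dquart : del (eta 0 * eta 1 * etb 0 * etb 1) = 0 := by
    rw [assoc4, Le, Le, Leb, hdel, hdel, hd1, hd2,
      zero_mul, zero_mul, zero_mul]
    simp
  have dbquart : delbar (eta 0 * eta 1 * etb 0 * etb 1) = 0 := by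
    rw [assoc4, Lbe, Lbe, Lbeb, hdb1, hdb2, hdelbarb, hdelbarb,
      zero_mul, zero_mul, zero_mul]
    simp
  refine ⟨main, dquart, dbquart, ⟨(4:ℂ) • (eta 2 * etb 3), ?_⟩⟩
  rw [map_smul, map_smul, main, smul_smul]
  norm_num
end
end
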